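/- arXiv:2301.02645 — 4 statements merged into one kernel-verified Lean document; each statement's English description precedes it below -/
import Mathlib

section
/- Let C be a square integer matrix with nonzero determinant whose cokernel ℤ^k/C·ℤ^k is isomorphic to ℤ/n₁ ⊕ ⋯ ⊕ ℤ/n_s (with n_{i+1} | n_i, and trivial factors omitted). Then the columns of L = n₁·C⁻¹, reduced modulo n₁, generate the kernel of C acting on (ℤ/n₁)^k. -/
open Matrix

/-- If the cokernel of `C` is `ℤ/n₁ ⊕ ⋯ ⊕ ℤ/n_s` (with `n_{i+1} ∣ n_i`), then
the columns of `L = n₁·C⁻¹`, reduced mod `n₁`, generate the kernel of `C`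
acting on `(ℤ/n₁)^k` (the group of Fox `n₁`-colorings). -/
theorem stmt6 (k : ℕ) (C : Matrix (Fin k) (Fin k) ℤ) (hdet : C.det ≠ 0)
    (s : ℕ) (hs : 0 < s) (n : Fin s → ℕ)
    (hpos : ∀ i, 0 < n i) (hone : ∀ i, 1 < n i)
    (hdvd : ∀ i : Fin s, ∀ h : i.val + 1 < s, n ⟨i.val + 1, h⟩ ∣ n i)
    (hcoker : Nonempty (((Fin k → ℤ) ⧸ LinearMap.range (Matrix.toLin' C))
        ≃+ (∀ i : Fin s, ZMod (n i))))
    (n₁ : ℕ) (hn₁ : n₁ = n ⟨0, hs⟩)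
    (L : Matrix (Fin k) (Fin k) ℤ)
    (hL : L.map (Int.cast : ℤ → ℚ) = (n₁ : ℚ) • (C.map (Int.cast : ℤ → ℚ))⁻¹) :
    AddSubgroup.closure {v : Fin k → ZMod n₁ | ∃ j : Fin k, v = fun i => ((L i j : ZMod n₁))}
      = (LinearMap.ker (Matrix.toLin' (C.map (Int.cast : ℤ → ZMod n₁)))).toAddSubgroup := by
  have hn2 : 1 < n₁ := hn₁ ▸ hone ⟨0, hs⟩
  haveI : NeZero n₁ := ⟨by omega⟩
  have hdetQ : IsUnit (C.map (Int.cast : ℤ → ℚ)).det := by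
    have : (C.map (Int.cast : ℤ → ℚ)).det = ((C.det : ℚ)) := by
      have h := RingHom.map_det (Int.castRingHom ℚ) C
      simpa [RingHom.mapMatrix_apply] using h.symm
    rw [this]
    exact isUnit_iff_ne_zero.mpr (by exact_mod_cast hdet)
  -- C * L = n₁ • 1 over ℤ
  have hCL : C * L = (n₁ : ℤ) • (1 : Matrix (Fin k) (Fin k) ℤ) := by
    have hinj : Function.Injective (fun M : Matrix (Fin k) (Fin k) ℤ =>
        M.map (Int.cast : ℤ → ℚ)) := by
      intro A B h
      ext i j
      have := congrFun (congrFun h i) j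
      simpa [Matrix.map_apply] using Int.cast_injective this
    apply hinj
    have h1 : (C * L).map (Int.cast : ℤ → ℚ)
        = C.map (Int.cast : ℤ → ℚ) * L.map (Int.cast : ℤ → ℚ) := by
      ext i j
      simp only [Matrix.map_apply, Matrix.mul_apply]
      push_cast
      rfl
    show (C * L).map (Int.cast : ℤ → ℚ) = ((n₁ : ℤ) • (1 : Matrix (Fin k) (Fin k) ℤ)).map (Int.cast : ℤ → ℚ)
    rw [h1, hL, Matrix.mul_smul, Matrix.mul_nonsing_inv _ hdetQ]
    ext i j
    simp only [Matrix.map_apply, Matrix.smul_apply, Matrix.one_apply, smul_eq_mul]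
    split <;> push_cast <;> ring
  -- mod n₁
  have hCL0 : C.map (Int.cast : ℤ → ZMod n₁) * L.map (Int.cast : ℤ → ZMod n₁) = 0 := by
    have h1 : (C * L).map (Int.cast : ℤ → ZMod n₁)
        = C.map (Int.cast : ℤ → ZMod n₁) * L.map (Int.cast : ℤ → ZMod n₁) := by
      ext i j
      simp only [Matrix.map_apply, Matrix.mul_apply]
      push_cast
      rfl
    rw [← h1, hCL]
    ext i j
    simp only [Matrix.map_apply, Matrix.smul_apply, Matrix.one_apply, smul_eq_mul,
      Matrix.zero_apply]
    split <;> push_cast <;> simp [ZMod.natCast_self]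
  apply le_antisymm
  · rw [AddSubgroup.closure_le]
    rintro v ⟨j, rfl⟩
    simp only [SetLike.mem_coe, Submodule.mem_toAddSubgroup, LinearMap.mem_ker,
      Matrix.toLin'_apply]
    ext i
    have := congrFun (congrFun hCL0 i) j
    simpa [Matrix.mulVec, dotProduct, Matrix.mul_apply, Matrix.map_apply] using this
  · intro v hv
    simp only [Submodule.mem_toAddSubgroup, LinearMap.mem_ker, Matrix.toLin'_apply] at hv
    set x : Fin k → ℤ := fun i => ((v i).val : ℤ) with hx
    have hxv : ∀ i, ((x i : ZMod n₁)) = v i := by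
      intro i
      simp [hx, ZMod.natCast_val, ZMod.cast_id]
    have hdvd1 : ∀ i, (n₁ : ℤ) ∣ (C *ᵥ x) i := by
      intro i
      rw [← ZMod.intCast_zmod_eq_zero_iff_dvd]
      have : ((C *ᵥ x) i : ZMod n₁) = (C.map (Int.cast : ℤ → ZMod n₁) *ᵥ v) i := by
        simp only [Matrix.mulVec, dotProduct, Matrix.map_apply]
        push_cast
        exact Finset.sum_congr rfl fun j _ => by rw [hxv j]
      rw [this, hv]
      rfl
    choose y hy using hdvd1
    -- x = L *ᵥ y over ℤ
    have hxLy : x = L *ᵥ y := by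
      have hQ : ∀ (z : Fin k → ℤ) (M : Matrix (Fin k) (Fin k) ℤ) (i : Fin k),
          (((M *ᵥ z) i : ℤ) : ℚ) = (M.map (Int.cast : ℤ → ℚ) *ᵥ fun j => ((z j : ℚ))) i := by
        intro z M i
        simp [Matrix.mulVec, dotProduct, Matrix.map_apply]
      have hCx : C.map (Int.cast : ℤ → ℚ) *ᵥ (fun j => ((x j : ℚ)))
          = (n₁ : ℚ) • fun j => ((y j : ℚ)) := by
        ext i
        rw [← hQ]
        rw [hy i]
        push_cast
        simp [mul_comm]
      have hinvC : (C.map (Int.cast : ℤ → ℚ))⁻¹ *ᵥ (C.map (Int.cast : ℤ → ℚ) *ᵥ fun j => ((x j : ℚ)))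
          = fun j => ((x j : ℚ)) := by
        rw [Matrix.mulVec_mulVec, Matrix.nonsing_inv_mul _ hdetQ, Matrix.one_mulVec]
      have : L.map (Int.cast : ℤ → ℚ) *ᵥ (fun j => ((y j : ℚ))) = fun j => ((x j : ℚ)) := by
        rw [hL, Matrix.smul_mulVec, ← hinvC, hCx, Matrix.mulVec_smul]
      ext i
      have h2 := congrFun this i
      rw [← hQ] at h2
      exact_mod_cast h2.symm
    -- v = sum of y j • columns
    have hvsum : v = ∑ j : Fin k, (y j) • (fun i => ((L i j : ZMod n₁))) := by
      ext i
      rw [← hxv i, hxLy]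
      simp only [Matrix.mulVec, dotProduct, Finset.sum_apply, Pi.smul_apply,
        zsmul_eq_mul]
      push_cast
      exact Finset.sum_congr rfl fun j _ => mul_comm _ _
    rw [hvsum]
    refine sum_mem fun j _ => AddSubgroup.zsmul_mem _ (AddSubgroup.subset_closure ?_) _
    exact ⟨j, rfl⟩
end

section
/- Let C be a square integer matrix with nonzero determinant and cokernel of exponent n₁. Then the number of solutions x ∈ (ℤ/n₁)^k to Cx = 0 equals |det C| (when all invariant factors of the cokernel divide n₁), i.e., the kernel of C mod n₁ is isomorphic to the cokernel ℤ^k/Cℤ^k. -/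
/-!
Since `n₁` kills the cokernel, every `n₁ eⱼ` lies in the image of `C`, which gives an integer
matrix `B` with `C B = n₁ = B C` (the second one by cancelling `det C ≠ 0` via the adjugate).
Then `y ↦ B y mod n₁` vanishes on `C ℤ^k` and induces an isomorphism of the cokernel onto the
kernel of `C` mod `n₁`: if `C x ≡ 0` then `C x = n₁ w` and `x = B w`, and if `B y ≡ 0` then
`B y = n₁ z` and `y = C z`. Finally the cokernel has `|det C|` elements (Smith normal form).
-/

theorem ZMod.intCast_comp_eq_zero_iff {ι : Type*} {n : ℕ} (v : ι → ℤ) :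
    ((↑) ∘ v : ι → ZMod n) = 0 ↔ ∃ z : ι → ℤ, (n : ℤ) • z = v := by
  simp only [funext_iff, Function.comp_apply, Pi.zero_apply, ZMod.intCast_zmod_eq_zero_iff_dvd,
    Pi.smul_apply, smul_eq_mul]
  exact ⟨fun h => ⟨fun i => (h i).choose, fun i => ((h i).choose_spec).symm⟩,
    fun ⟨z, hz⟩ i => ⟨z i, (hz i).symm⟩⟩

namespace Matrix

section Domain

variable {ι R : Type*} [Fintype ι] [DecidableEq ι] [CommRing R] [IsDomain R]

theorem mul_eq_smul_one_comm {C B : Matrix ι ι R} {a : R} (hdet : C.det ≠ 0)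
    (h : C * B = a • 1) : B * C = a • 1 := by
  apply smul_right_injective _ hdet
  calc C.det • (B * C) = C.adjugate * (C * B) * C := by
          rw [← Matrix.mul_assoc, adjugate_mul, smul_mul, Matrix.one_mul, smul_mul]
    _ = C.det • (a • 1) := by
          rw [h, Matrix.mul_smul, Matrix.mul_one, smul_mul, adjugate_mul, smul_comm]

end Domain

variable {ι : Type*} [Fintype ι] {n : ℕ}

theorem intCast_comp_mulVec (M : Matrix ι ι ℤ) (v : ι → ℤ) :
    ((↑) ∘ (M *ᵥ v) : ι → ZMod n) = M.map (↑) *ᵥ ((↑) ∘ v) :=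
  funext (RingHom.map_mulVec (Int.castRingHom (ZMod n)) M v)

variable [DecidableEq ι]

theorem natCard_quotient_range_toLin' {C : Matrix ι ι ℤ} (hdet : C.det ≠ 0) :
    Nat.card ((ι → ℤ) ⧸ LinearMap.range (toLin' C)) = C.det.natAbs := by
  let e := LinearEquiv.ofInjective (toLin' C) (mulVec_injective_of_det_ne_zero hdet)
  rw [← Submodule.natAbs_det_equiv _ e.toAddEquiv, ← LinearMap.det_toLin' C]
  rfl

theorem exists_mul_eq_smul_one {C : Matrix ι ι ℤ}
    (hn : ∀ q : (ι → ℤ) ⧸ LinearMap.range (toLin' C), n • q = 0) :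
    ∃ B : Matrix ι ι ℤ, C * B = (n : ℤ) • 1 := by
  have hmem (j : ι) : ∃ b : ι → ℤ, C *ᵥ b = (n : ℤ) • Pi.single j 1 := by
    have := hn (Submodule.Quotient.mk (Pi.single j 1))
    rwa [← natCast_zsmul, ← Submodule.Quotient.mk_smul, Submodule.Quotient.mk_eq_zero] at this
  choose b hb using hmem
  refine ⟨(of b)ᵀ, ext fun i j => ?_⟩
  have := congrFun (hb j) i
  simpa [mul_apply, mulVec, dotProduct, Pi.single_apply, one_apply] using this

def mulVecMod (B : Matrix ι ι ℤ) (n : ℕ) : (ι → ℤ) →ₗ[ℤ] (ι → ZMod n) :=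
  (Int.castAddHom (ZMod n)).toIntLinearMap.compLeft ι ∘ₗ toLin' B

theorem mulVecMod_apply (B : Matrix ι ι ℤ) (y : ι → ℤ) :
    mulVecMod B n y = (↑) ∘ (B *ᵥ y) := rfl

variable {C B : Matrix ι ι ℤ}

theorem range_toLin'_le_ker_mulVecMod (hBC : B * C = (n : ℤ) • 1) :
    LinearMap.range (toLin' C) ≤ LinearMap.ker (mulVecMod B n) := by
  rintro _ ⟨z, rfl⟩
  rw [LinearMap.mem_ker, mulVecMod_apply, toLin'_apply, mulVec_mulVec, hBC, smul_mulVec,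
    one_mulVec, ZMod.intCast_comp_eq_zero_iff]
  exact ⟨z, rfl⟩

theorem mulVecMod_mem_ker (hCB : C * B = (n : ℤ) • 1) (y : ι → ℤ) :
    mulVecMod B n y ∈ LinearMap.ker (toLin' (C.map (Int.cast : ℤ → ZMod n))) := by
  rw [LinearMap.mem_ker, toLin'_apply, mulVecMod_apply, ← intCast_comp_mulVec, mulVec_mulVec,
    hCB, smul_mulVec, one_mulVec, ZMod.intCast_comp_eq_zero_iff]
  exact ⟨y, rfl⟩

theorem mem_range_toLin'_of_mulVecMod_eq_zero (hn : n ≠ 0) (hCB : C * B = (n : ℤ) • 1)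
    {y : ι → ℤ} (hy : mulVecMod B n y = 0) : y ∈ LinearMap.range (toLin' C) := by
  obtain ⟨z, hz⟩ := (ZMod.intCast_comp_eq_zero_iff (B *ᵥ y)).mp hy
  refine ⟨z, smul_right_injective _ (Int.natCast_ne_zero.mpr hn) ?_⟩
  calc (n : ℤ) • toLin' C z = C *ᵥ (B *ᵥ y) := by rw [← hz, toLin'_apply, mulVec_smul]
    _ = (n : ℤ) • y := by rw [mulVec_mulVec, hCB, smul_mulVec, one_mulVec]

theorem exists_mulVecMod_eq (hn : n ≠ 0) (hBC : B * C = (n : ℤ) • 1) {x : ι → ZMod n}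
    (hx : x ∈ LinearMap.ker (toLin' (C.map (Int.cast : ℤ → ZMod n)))) :
    ∃ w, mulVecMod B n w = x := by
  obtain ⟨x, rfl⟩ : ∃ x' : ι → ℤ, (↑) ∘ x' = x :=
    ⟨fun i => (x i).cast, funext fun i => ZMod.intCast_zmod_cast (x i)⟩
  rw [LinearMap.mem_ker, toLin'_apply, ← intCast_comp_mulVec,
    ZMod.intCast_comp_eq_zero_iff] at hx
  obtain ⟨w, hw⟩ := hx
  have hBw : B *ᵥ w = x := smul_right_injective _ (Int.natCast_ne_zero.mpr hn) <| by
    change (n : ℤ) • (B *ᵥ w) = (n : ℤ) • x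
    rw [← mulVec_smul, hw, mulVec_mulVec, hBC, smul_mulVec, one_mulVec]
  exact ⟨w, by rw [mulVecMod_apply, hBw]⟩

theorem nonempty_ker_addEquiv_coker (hn : n ≠ 0) (hCB : C * B = (n : ℤ) • 1)
    (hBC : B * C = (n : ℤ) • 1) :
    Nonempty (LinearMap.ker (toLin' (C.map (Int.cast : ℤ → ZMod n)))
      ≃+ ((ι → ℤ) ⧸ LinearMap.range (toLin' C))) := by
  let F := (LinearMap.range (toLin' C)).liftQ _ (range_toLin'_le_ker_mulVecMod hBC)
  have hF_mem (q) : F q ∈ LinearMap.ker (toLin' (C.map (Int.cast : ℤ → ZMod n))) := by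
    obtain ⟨y, rfl⟩ := Submodule.Quotient.mk_surjective _ q
    exact mulVecMod_mem_ker hCB y
  let G := F.toAddMonoidHom.codRestrict _ hF_mem
  have hG_inj : Function.Injective G := by
    rw [injective_iff_map_eq_zero]
    rintro ⟨y⟩ hy
    exact (Submodule.Quotient.mk_eq_zero _).mpr
      (mem_range_toLin'_of_mulVecMod_eq_zero hn hCB (congrArg Subtype.val hy))
  have hG_surj : Function.Surjective G := by
    rintro ⟨x, hx⟩
    obtain ⟨w, hw⟩ := exists_mulVecMod_eq hn hBC hx
    exact ⟨Submodule.Quotient.mk w, Subtype.ext hw⟩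
  exact ⟨(AddEquiv.ofBijective G ⟨hG_inj, hG_surj⟩).symm⟩

end Matrix

/-- If `C` is a square integer matrix with `det C ≠ 0` whose cokernel has
exponent `n₁`, then the kernel of `C` mod `n₁` is isomorphic to the cokernel
`ℤ^k/Cℤ^k`, and in particular has `|det C|` elements. -/
theorem stmt7 (k : ℕ) (C : Matrix (Fin k) (Fin k) ℤ) (hdet : C.det ≠ 0)
    (n₁ : ℕ) (hn₁ : 0 < n₁)
    (hexp : AddMonoid.exponent ((Fin k → ℤ) ⧸ LinearMap.range (Matrix.toLin' C)) = n₁) :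
    Nonempty ((LinearMap.ker (Matrix.toLin' (C.map (Int.cast : ℤ → ZMod n₁))))
        ≃+ ((Fin k → ℤ) ⧸ LinearMap.range (Matrix.toLin' C))) ∧
    Nat.card (LinearMap.ker (Matrix.toLin' (C.map (Int.cast : ℤ → ZMod n₁))))
      = C.det.natAbs := by
  obtain ⟨B, hCB⟩ :=
    Matrix.exists_mul_eq_smul_one fun q => hexp ▸ AddMonoid.exponent_nsmul_eq_zero q
  obtain ⟨e⟩ :=
    Matrix.nonempty_ker_addEquiv_coker hn₁.ne' hCB (Matrix.mul_eq_smul_one_comm hdet hCB)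
  exact ⟨⟨e⟩, (Nat.card_congr e.toEquiv).trans (Matrix.natCard_quotient_range_toLin' hdet)⟩
end

section
/- Let n₁ be a positive integer and let G ≤ (ℤ/n₁)^k be a subgroup containing the all-ones vector 𝟙 (trivial colorings). Suppose that for every pair of distinct indices i, j there is x ∈ G with x_i ≠ x_j. If G/⟨𝟙⟩ ≅ ℤ/n₁ ⊕ ⋯ ⊕ ℤ/n_s with n_{i+1}|n_i, then there exist s elements y₁, ..., y_s ∈ G such that for every pair of distinct indices i, j, some y_t satisfies (y_t)_i ≠ (y_t)_j. -/
/-- A hom out of a finite product of `ZMod` groups vanishing on the standard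
generators is zero. -/
lemma hom_eq_zero_of_single {s : ℕ} (n : Fin s → ℕ) (hpos : ∀ i, 0 < n i)
    {M : Type*} [AddCommGroup M] (ψ : (∀ i : Fin s, ZMod (n i)) →+ M)
    (h : ∀ t, ψ (Pi.single t 1) = 0) (v : ∀ i : Fin s, ZMod (n i)) : ψ v = 0 := by
  have hv : v = ∑ t : Fin s, Pi.single t (v t) := (Finset.univ_sum_single v).symm
  rw [hv, map_sum]
  apply Finset.sum_eq_zero
  intro t _
  have : NeZero (n t) := ⟨(hpos t).ne'⟩
  have hvt : Pi.single t (v t) = (v t).val • (Pi.single t (1 : ZMod (n t)) : ∀ i, ZMod (n i)) := by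
    funext j
    rcases eq_or_ne j t with rfl | hj
    · simp [ZMod.natCast_val, ZMod.cast_id, nsmul_eq_mul]
    · simp [Pi.single_apply, hj]
  rw [hvt, map_nsmul, h t, smul_zero]

/-- Let `G ≤ (ℤ/n₁)^k` contain the all-ones vector `𝟙` and suppose every pair
of distinct coordinates is distinguished by some element of `G`. If
`G/⟨𝟙⟩ ≅ ℤ/n₁ ⊕ ⋯ ⊕ ℤ/n_s` with `n_{i+1} ∣ n_i`, then there are `s` elements
of `G` such that every pair of distinct coordinates is distinguished by one
of them. -/
theorem stmt16 (n₁ k : ℕ) (hn₁ : 0 < n₁)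
    (G : AddSubgroup (Fin k → ZMod n₁))
    (hone : (fun _ => (1 : ZMod n₁)) ∈ G)
    (hdist : ∀ i j : Fin k, i ≠ j → ∃ x ∈ G, x i ≠ x j)
    (s : ℕ) (hs : 0 < s) (n : Fin s → ℕ) (hpos : ∀ i, 0 < n i)
    (hdvd : ∀ i : Fin s, ∀ h : i.val + 1 < s, n ⟨i.val + 1, h⟩ ∣ n i)
    (hn₁' : n ⟨0, hs⟩ = n₁)
    (hquot : Nonempty
      ((G ⧸ AddSubgroup.closure {(⟨fun _ => (1 : ZMod n₁), hone⟩ : G)})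
        ≃+ (∀ i : Fin s, ZMod (n i)))) :
    ∃ y : Fin s → (Fin k → ZMod n₁), (∀ t, y t ∈ G) ∧
      ∀ i j : Fin k, i ≠ j → ∃ t, y t i ≠ y t j := by
  obtain ⟨φ⟩ := hquot
  set N := AddSubgroup.closure {(⟨fun _ => (1 : ZMod n₁), hone⟩ : G)} with hN
  -- choose representatives of the standard generators
  have hsurj : Function.Surjective (QuotientAddGroup.mk' N) :=
    QuotientAddGroup.mk'_surjective N
  choose g hg using fun t : Fin s => hsurj (φ.symm (Pi.single t 1))
  refine ⟨fun t => (g t : Fin k → ZMod n₁), fun t => (g t).2, ?_⟩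
  intro i j hij
  by_contra hcon
  push_neg at hcon
  obtain ⟨x, hxG, hxij⟩ := hdist i j hij
  -- the coordinate-difference homomorphism
  let f : G →+ ZMod n₁ :=
    { toFun := fun a => a.1 i - a.1 j
      map_zero' := by simp
      map_add' := by intro a b; simp; ring }
  have hker : N ≤ f.ker := by
    rw [hN, AddSubgroup.closure_le]
    intro a ha
    simp only [Set.mem_singleton_iff] at ha
    subst ha
    simp [f, AddMonoidHom.mem_ker]
  let fbar : (G ⧸ N) →+ ZMod n₁ := QuotientAddGroup.lift N f hker
  let ψ : (∀ i : Fin s, ZMod (n i)) →+ ZMod n₁ :=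
    fbar.comp φ.symm.toAddMonoidHom
  have hψ : ∀ t, ψ (Pi.single t 1) = 0 := by
    intro t
    have : ψ (Pi.single t 1) = f (g t) := by
      simp only [ψ, AddMonoidHom.comp_apply, AddEquiv.coe_toAddMonoidHom]
      rw [← hg t]
      rfl
    rw [this]
    simpa [f, sub_eq_zero] using hcon t
  have hzero := hom_eq_zero_of_single n hpos ψ hψ (φ (QuotientAddGroup.mk' N ⟨x, hxG⟩))
  have : f ⟨x, hxG⟩ = 0 := by
    have h1 : ψ (φ (QuotientAddGroup.mk' N ⟨x, hxG⟩)) = f ⟨x, hxG⟩ := by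
      simp only [ψ, AddMonoidHom.comp_apply, AddEquiv.coe_toAddMonoidHom,
        AddEquiv.symm_apply_apply]
      rfl
    rw [← h1, hzero]
  exact hxij (sub_eq_zero.mp this)
end

section
/- Let p be a prime and let G ≤ (ℤ/p)^k be a subgroup containing the all-ones vector 𝟙, with G/⟨𝟙⟩ ≅ ℤ/p. If for every pair of distinct indices i, j there exists x ∈ G with x_i ≠ x_j, then every element of G not in ⟨𝟙⟩ satisfies x_i ≠ x_j for all distinct i, j. -/
/-!
The coordinate difference `g ↦ g i - g j` is a homomorphism `G → ℤ/p` that kills `𝟙`, so it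
factors through `G ⧸ ⟨𝟙⟩`, a group of prime order. Any `x ∈ G ∖ ⟨𝟙⟩` maps to a generator of
that quotient, so if `x i = x j` the factored map vanishes on a generator, hence everywhere,
and no element of `G` distinguishes `i` from `j`.
-/

theorem AddMonoidHom.eq_zero_of_prime_card_quotient {M A : Type*} [AddCommGroup M] [AddGroup A]
    {N : AddSubgroup M} {p : ℕ} [Fact p.Prime] (hN : Nat.card (M ⧸ N) = p) (f : M →+ A)
    (hfN : N ≤ f.ker) {x : M} (hx : x ∉ N) (hfx : f x = 0) : f = 0 := by
  have hgen : (x : M ⧸ N) ≠ 0 := by rwa [Ne, QuotientAddGroup.eq_zero_iff]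
  ext y
  obtain ⟨n, hn⟩ := mem_zmultiples_of_prime_card hN hgen (g' := (y : M ⧸ N))
  calc f y = QuotientAddGroup.lift N f hfN (y : M ⧸ N) := rfl
    _ = n • f x := by rw [← hn, map_zsmul]; rfl
    _ = 0 := by rw [hfx, zsmul_zero]

theorem AddSubgroup.mem_closure_singleton_of_subtype {M : Type*} [AddGroup M]
    {H : AddSubgroup M} {a b : M} {ha : a ∈ H} {hb : b ∈ H}
    (h : (⟨b, hb⟩ : H) ∈ closure {⟨a, ha⟩}) : b ∈ closure {a} := by
  obtain ⟨n, hn⟩ := mem_closure_singleton.mp h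
  exact mem_closure_singleton.mpr ⟨n, congrArg Subtype.val hn⟩

/-- Let `p` be prime and `G ≤ (ℤ/p)^k` contain the all-ones vector `𝟙`, with
`G/⟨𝟙⟩ ≅ ℤ/p`. If every pair of distinct coordinates is distinguished by some
element of `G`, then every element of `G` not in `⟨𝟙⟩` has pairwise distinct
coordinates. -/
theorem stmt17 (p k : ℕ) (hp : p.Prime)
    (G : AddSubgroup (Fin k → ZMod p))
    (hone : (fun _ => (1 : ZMod p)) ∈ G)
    (hquot : Nonempty
      ((G ⧸ AddSubgroup.closure {(⟨fun _ => (1 : ZMod p), hone⟩ : G)}) ≃+ ZMod p))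
    (hdist : ∀ i j : Fin k, i ≠ j → ∃ x ∈ G, x i ≠ x j) :
    ∀ x ∈ G, x ∉ AddSubgroup.closure {(fun _ => (1 : ZMod p) : Fin k → ZMod p)} →
      ∀ i j : Fin k, i ≠ j → x i ≠ x j := by
  have := Fact.mk hp
  intro x hxG hx i j hij hxij
  obtain ⟨y, hyG, hyij⟩ := hdist i j hij
  obtain ⟨e⟩ := hquot
  let δ : G →+ ZMod p :=
    (Pi.evalAddMonoidHom (fun _ => ZMod p) i - Pi.evalAddMonoidHom _ j).comp G.subtype
  have hδone : AddSubgroup.closure {⟨fun _ => 1, hone⟩} ≤ δ.ker :=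
    (AddSubgroup.closure_le _).mpr (by simp [δ])
  have hcard : Nat.card (G ⧸ AddSubgroup.closure {⟨fun _ => 1, hone⟩}) = p := by
    rw [Nat.card_congr e.toEquiv, Nat.card_zmod]
  have hδx : δ ⟨x, hxG⟩ = 0 := by simp [δ, hxij]
  have hδ : δ = 0 := δ.eq_zero_of_prime_card_quotient hcard hδone
    (fun h => hx (AddSubgroup.mem_closure_singleton_of_subtype h)) hδx
  have hδy : δ ⟨y, hyG⟩ = 0 := by rw [hδ, AddMonoidHom.zero_apply]
  exact hyij (sub_eq_zero.mp hδy)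
end
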